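/- Let D be a duplicate-free Shift-ECS, let v be a product node, and let w ∈ ⟦D⟧(v). Then there exist unique strings w1, w2 and unique bottom-or-product ('output') union-descendants v1 of ℓ(v) and v2 of r(v) such that w = w1 · w2, w1 is a shifted element of ⟦D⟧(v1), and w2 is a shifted element of ⟦D⟧(v2), where the shifts are the accumulated shift values along the unique union/shift paths from ℓ(v) to v1 and from r(v) to v2. -/

import Mathlib

/-- Shift a string over `Ω × ℤ` by `k`: add `k` to every position. -/
def sh {Ω : Type} (w : List (Ω × ℤ)) (k : ℤ) : List (Ω × ℤ) :=
  w.map (fun p => (p.1, p.2 + k))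

def shL {Ω : Type} (L : Set (List (Ω × ℤ))) (k : ℤ) : Set (List (Ω × ℤ)) :=
  (fun w => sh w k) '' L

def catL {Ω : Type} (L1 L2 : Set (List (Ω × ℤ))) : Set (List (Ω × ℤ)) :=
  Set.image2 (· ++ ·) L1 L2

/-- Labels of a Shift-ECS node: an output letter, a shift value, union, or product. -/
inductive Lab (Ω : Type) where
  | bot (o : Ω)
  | shift (k : ℤ)
  | union
  | prod

/-- A Shift-ECS: nodes with partial left/right children and a labeling. -/
structure ECS (Ω : Type) where
  V : Type
  l : V → Option V
  r : V → Option V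
  lab : V → Lab Ω

/-- The semantics `⟦D⟧(v)` of a Shift-ECS, as an inductively defined
membership relation: singletons at bottom nodes, union at `∪`-nodes,
concatenation at `⊙`-nodes, and shifting at shift nodes. -/
inductive ECS.Sem {Ω : Type} (D : ECS Ω) : D.V → List (Ω × ℤ) → Prop
  | bot {v o} : D.lab v = .bot o → D.Sem v [(o, 1)]
  | unionL {v u w} : D.lab v = .union → D.l v = some u → D.Sem u w → D.Sem v w
  | unionR {v u w} : D.lab v = .union → D.r v = some u → D.Sem u w → D.Sem v w
  | prod {v u1 u2 w1 w2} : D.lab v = .prod → D.l v = some u1 → D.r v = some u2 →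
      D.Sem u1 w1 → D.Sem u2 w2 → D.Sem v (w1 ++ w2)
  | shift {v u k w} : D.lab v = .shift k → D.l v = some u → D.Sem u w → D.Sem v (sh w k)

/-- `⟦D⟧(v)` as a set. -/
def ECS.semSet {Ω : Type} (D : ECS Ω) (v : D.V) : Set (List (Ω × ℤ)) :=
  {w | D.Sem v w}

/-- `D.UDesc u s v`: `v` is a union-descendant of `u` reachable by a path of
union and shift nodes, and `s` is the accumulated shift value along that path. -/
inductive ECS.UDesc {Ω : Type} (D : ECS Ω) : D.V → ℤ → D.V → Prop
  | refl {v} : D.UDesc v 0 v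
  | unionL {u s v u'} : D.lab u = .union → D.l u = some u' → D.UDesc u' s v →
      D.UDesc u s v
  | unionR {u s v u'} : D.lab u = .union → D.r u = some u' → D.UDesc u' s v →
      D.UDesc u s v
  | shift {u k u' s v} : D.lab u = .shift k → D.l u = some u' → D.UDesc u' s v →
      D.UDesc u (k + s) v

/-- An output node: a bottom node or a product node. -/
def ECS.IsOutput {Ω : Type} (D : ECS Ω) (v : D.V) : Prop :=
  D.lab v = .prod ∨ ∃ o, D.lab v = .bot o

/-- `D` is duplicate-free: children of union nodes have disjoint semantics,
and every string in the semantics of a product node decomposes uniquely. -/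
def ECS.DupFree {Ω : Type} (D : ECS Ω) : Prop :=
  (∀ v u1 u2, D.lab v = .union → D.l v = some u1 → D.r v = some u2 →
    ∀ w, ¬(D.Sem u1 w ∧ D.Sem u2 w)) ∧
  (∀ v u1 u2, D.lab v = .prod → D.l v = some u1 → D.r v = some u2 →
    ∀ w1 w2 w1' w2', D.Sem u1 w1 → D.Sem u2 w2 → D.Sem u1 w1' → D.Sem u2 w2' →
      w1 ++ w2 = w1' ++ w2' → w1 = w1' ∧ w2 = w2')

section Shift

variable {Ω : Type}

lemma sh_zero (w : List (Ω × ℤ)) : sh w 0 = w := by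
  simp [sh]

lemma sh_sh (w : List (Ω × ℤ)) (a b : ℤ) : sh (sh w a) b = sh w (a + b) := by
  simp [sh, add_assoc]

lemma sh_injective (k : ℤ) : Function.Injective (fun w : List (Ω × ℤ) => sh w k) :=
  Function.LeftInverse.injective (g := fun w => sh w (-k)) fun w => by
    simp only [sh_sh, add_neg_cancel, sh_zero]

lemma shL_zero (L : Set (List (Ω × ℤ))) : shL L 0 = L := by
  simp [shL, sh_zero]

lemma shL_add (L : Set (List (Ω × ℤ))) (a b : ℤ) :
    shL L (a + b) = shL (shL L b) a := by
  simp only [shL, Set.image_image, sh_sh, add_comm]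

lemma sh_mem_shL_iff {L : Set (List (Ω × ℤ))} {w : List (Ω × ℤ)} {k : ℤ} :
    sh w k ∈ shL L k ↔ w ∈ L :=
  (sh_injective k).mem_set_image

end Shift

namespace ECS

variable {Ω : Type} {D : ECS Ω}

lemma IsOutput.lab_ne_union {v : D.V} (h : D.IsOutput v) : D.lab v ≠ .union := by
  rcases h with h | ⟨o, h⟩ <;> simp [h]

lemma IsOutput.lab_ne_shift {v : D.V} (h : D.IsOutput v) (k : ℤ) : D.lab v ≠ .shift k := by
  rcases h with h | ⟨o, h⟩ <;> simp [h]

lemma Sem.exists_append_of_prod {v u1 u2 : D.V} {w : List (Ω × ℤ)} (hw : D.Sem v w)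
    (hv : D.lab v = .prod) (hl : D.l v = some u1) (hr : D.r v = some u2) :
    ∃ w1 w2, D.Sem u1 w1 ∧ D.Sem u2 w2 ∧ w = w1 ++ w2 := by
  cases hw with
  | prod _ hl' hr' h1 h2 =>
    cases hl.symm.trans hl'
    cases hr.symm.trans hr'
    exact ⟨_, _, h1, h2, rfl⟩
  | bot hb | unionL hb _ _ | unionR hb _ _ | shift hb _ _ => cases hv.symm.trans hb

lemma UDesc.shL_semSet_subset {u v : D.V} {s : ℤ} (h : D.UDesc u s v) :
    shL (D.semSet v) s ⊆ D.semSet u := by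
  induction h with
  | refl => rw [shL_zero]
  | unionL hu hl _ ih => exact fun w hw => Sem.unionL hu hl (ih hw)
  | unionR hu hr _ ih => exact fun w hw => Sem.unionR hu hr (ih hw)
  | shift hk hl _ ih =>
    rw [shL_add]
    rintro _ ⟨w, hw, rfl⟩
    exact Sem.shift hk hl (ih hw)

lemma Sem.exists_output_udesc {u : D.V} {w : List (Ω × ℤ)} (h : D.Sem u w) :
    ∃ v s, D.UDesc u s v ∧ D.IsOutput v ∧ w ∈ shL (D.semSet v) s := by
  induction h with
  | @bot v o hb => exact ⟨v, 0, .refl, .inr ⟨o, hb⟩, by rw [shL_zero]; exact Sem.bot hb⟩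
  | unionL hu hl _ ih =>
    obtain ⟨v, s, hd, ho, hm⟩ := ih
    exact ⟨v, s, .unionL hu hl hd, ho, hm⟩
  | unionR hu hr _ ih =>
    obtain ⟨v, s, hd, ho, hm⟩ := ih
    exact ⟨v, s, .unionR hu hr hd, ho, hm⟩
  | @prod v _ _ _ _ hp hl hr h1 h2 =>
    exact ⟨v, 0, .refl, .inl hp, by rw [shL_zero]; exact Sem.prod hp hl hr h1 h2⟩
  | shift hk hl _ ih =>
    obtain ⟨v, s, hd, ho, hm⟩ := ih
    exact ⟨v, _ + s, .shift hk hl hd, ho, by rw [shL_add]; exact Set.mem_image_of_mem _ hm⟩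

/-- Below a union node the two branches have disjoint semantics, so a string determines the
branch; shift nodes are injective, so it also determines the string below the shift. -/
lemma UDesc.output_unique (hdf : D.DupFree) {u v v' : D.V} {s s' : ℤ}
    (h : D.UDesc u s v) (ho : D.IsOutput v) (h' : D.UDesc u s' v') (ho' : D.IsOutput v')
    {w : List (Ω × ℤ)} (hw : w ∈ shL (D.semSet v) s) (hw' : w ∈ shL (D.semSet v') s') :
    v = v' ∧ s = s' := by
  induction h generalizing s' w with
  | refl =>
    cases h' with
    | refl => exact ⟨rfl, rfl⟩
    | unionL hu _ _ | unionR hu _ _ => exact absurd hu ho.lab_ne_union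
    | shift hk _ _ => exact absurd hk (ho.lab_ne_shift _)
  | unionL hu hl hd ih =>
    cases h' with
    | refl => exact absurd hu ho'.lab_ne_union
    | unionL _ hl' hd' =>
      cases hl.symm.trans hl'
      exact ih ho hd' hw hw'
    | unionR _ hr' hd' =>
      exact absurd ⟨hd.shL_semSet_subset hw, hd'.shL_semSet_subset hw'⟩ (hdf.1 _ _ _ hu hl hr' w)
    | shift hk _ _ => cases hu.symm.trans hk
  | unionR hu hr hd ih =>
    cases h' with
    | refl => exact absurd hu ho'.lab_ne_union
    | unionL _ hl' hd' =>
      exact absurd ⟨hd'.shL_semSet_subset hw', hd.shL_semSet_subset hw⟩ (hdf.1 _ _ _ hu hl' hr w)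
    | unionR _ hr' hd' =>
      cases hr.symm.trans hr'
      exact ih ho hd' hw hw'
    | shift hk _ _ => cases hu.symm.trans hk
  | shift hk hl hd ih =>
    cases h' with
    | refl => exact absurd hk (ho'.lab_ne_shift _)
    | unionL hu _ _ | unionR hu _ _ => cases hk.symm.trans hu
    | shift hk' hl' hd' =>
      cases hk.symm.trans hk'
      cases hl.symm.trans hl'
      rw [shL_add] at hw hw'
      obtain ⟨x, hx, rfl⟩ := hw
      obtain ⟨v', hs⟩ := ih ho hd' hx (sh_mem_shL_iff.mp hw')
      exact ⟨v', by rw [hs]⟩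

end ECS

/-- In a duplicate-free Shift-ECS, every string in the semantics of a product
node `v` decomposes uniquely as `w1 · w2` with unique output union-descendants
`v1` of `ℓ(v)` and `v2` of `r(v)` and accumulated shifts `s1`, `s2` such that
`w1 ∈ sh(⟦D⟧(v1), s1)` and `w2 ∈ sh(⟦D⟧(v2), s2)`. -/
theorem dupfree_unique_output_decomposition {Ω : Type} (D : ECS Ω)
    (hdf : D.DupFree) (v u1 u2 : D.V)
    (hv : D.lab v = .prod) (hl : D.l v = some u1) (hr : D.r v = some u2)
    (w : List (Ω × ℤ)) (hw : D.Sem v w) :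
    ∃! t : (List (Ω × ℤ) × List (Ω × ℤ)) × (D.V × ℤ) × (D.V × ℤ),
      w = t.1.1 ++ t.1.2 ∧
      D.UDesc u1 t.2.1.2 t.2.1.1 ∧ D.IsOutput t.2.1.1 ∧
      t.1.1 ∈ shL (D.semSet t.2.1.1) t.2.1.2 ∧
      D.UDesc u2 t.2.2.2 t.2.2.1 ∧ D.IsOutput t.2.2.1 ∧
      t.1.2 ∈ shL (D.semSet t.2.2.1) t.2.2.2 := by
  obtain ⟨w1, w2, hs1, hs2, rfl⟩ := hw.exists_append_of_prod hv hl hr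
  obtain ⟨v1, s1, hd1, ho1, hm1⟩ := hs1.exists_output_udesc
  obtain ⟨v2, s2, hd2, ho2, hm2⟩ := hs2.exists_output_udesc
  refine ⟨((w1, w2), (v1, s1), (v2, s2)), ⟨rfl, hd1, ho1, hm1, hd2, ho2, hm2⟩, ?_⟩
  rintro ⟨⟨w1', w2'⟩, ⟨v1', s1'⟩, ⟨v2', s2'⟩⟩ ⟨hw, hd1', ho1', hm1', hd2', ho2', hm2'⟩
  obtain ⟨rfl, rfl⟩ := hdf.2 v u1 u2 hv hl hr w1' w2' w1 w2
    (hd1'.shL_semSet_subset hm1') (hd2'.shL_semSet_subset hm2') hs1 hs2 hw.symm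
  obtain ⟨rfl, rfl⟩ := ECS.UDesc.output_unique hdf hd1' ho1' hd1 ho1 hm1' hm1
  obtain ⟨rfl, rfl⟩ := ECS.UDesc.output_unique hdf hd2' ho2' hd2 ho2 hm2' hm2
  rfl
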